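/- arXiv:1704.08396 — 3 statements merged into one kernel-verified Lean document; each statement's English description precedes it below -/
import Mathlib

section
/- Let d be a fibered dimension function on a monster model U of a complete theory T, and let X ⊆ U^n be a definable set with parameters in C. Then there exists a tuple a ∈ U^n realizing a type over C of dimension exactly d(X), i.e. d(a/C) = d(X). -/
open FirstOrder Set

/-- The projection of a point in `U^{n+1}` onto its first `n` coordinates. -/
def frontOf {U : Type*} {n : ℕ} (x : Fin (n + 1) → U) : Fin n → U :=
  x ∘ Fin.castSucc

/-- The fiber of `X ⊆ U^{n+1}` over a point `a ∈ U^n`, viewed as a subset of `U^1`. -/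
def fiberOf {U : Type*} {n : ℕ} (X : Set (Fin (n + 1) → U)) (a : Fin n → U) :
    Set (Fin 1 → U) :=
  {y | Fin.snoc a (y 0) ∈ X}

/-- A fibered dimension function on a first-order structure `U`: a function `d` from
definable sets (in all finite powers of `U`) to `ℕ ∪ {-∞}` satisfying (Dim 1)–(Dim 4). -/
structure FiberedDim (L : FirstOrder.Language) (U : Type*) [L.Structure U] where
  /-- the dimension function -/
  d : ∀ {n : ℕ}, Set (Fin n → U) → WithBot ℕ
  /-- (Dim 1): `d X = -∞` iff `X = ∅` -/
  dim1_empty : ∀ {n : ℕ} (X : Set (Fin n → U)), d X = ⊥ ↔ X = ∅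
  /-- (Dim 1): singletons have dimension `0` -/
  dim1_singleton : ∀ a : U, d ({fun _ => a} : Set (Fin 1 → U)) = 0
  /-- (Dim 1): `d U = 1` -/
  dim1_univ : d (Set.univ : Set (Fin 1 → U)) = 1
  /-- (Dim 2): `d (X ∪ Y) = max (d X) (d Y)` -/
  dim2 : ∀ {n : ℕ} (X Y : Set (Fin n → U)), d (X ∪ Y) = max (d X) (d Y)
  /-- (Dim 3): invariance under coordinate permutations -/
  dim3 : ∀ {n : ℕ} (X : Set (Fin n → U)) (σ : Equiv.Perm (Fin n)),
    d {x | x ∘ σ ∈ X} = d X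
  /-- (Dim 4): for definable `X ⊆ U^{n+1}` and `l ∈ {0,1}`, the set
  `X(l) = {a ∈ π_n(X) : d (X_a) = l}` is definable and
  `d {(x,y) ∈ X : x ∈ X(l)} = d (X(l)) + l`. -/
  dim4 : ∀ {n : ℕ} (X : Set (Fin (n + 1) → U)), Set.Definable Set.univ L X →
    ∀ l : ℕ, l ≤ 1 →
      Set.Definable Set.univ L
        {a : Fin n → U | (∃ y : U, Fin.snoc a y ∈ X) ∧ d (fiberOf X a) = (l : WithBot ℕ)} ∧
      d {p : Fin (n + 1) → U | p ∈ X ∧ (∃ y : U, Fin.snoc (frontOf p) y ∈ X) ∧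
          d (fiberOf X (frontOf p)) = (l : WithBot ℕ)}
        = d {a : Fin n → U | (∃ y : U, Fin.snoc a y ∈ X) ∧
            d (fiberOf X a) = (l : WithBot ℕ)} + (l : WithBot ℕ)


/-- `D.IsDimOver C a m` says that `m` is the dimension `d(a/C)` of the type of the tuple
`a` over the parameter set `C`, i.e. the infimum (which is always attained) of the
dimensions of the `C`-definable sets containing `a`. -/
def FiberedDim.IsDimOver {L : FirstOrder.Language} {U : Type*} [L.Structure U]
    (D : FiberedDim L U) (C : Set U) {n : ℕ} (a : Fin n → U) (m : WithBot ℕ) : Prop :=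
  (∃ X : Set (Fin n → U), Set.Definable C L X ∧ a ∈ X ∧ D.d X = m) ∧
  ∀ X : Set (Fin n → U), Set.Definable C L X → a ∈ X → m ≤ D.d X

/-- in a sufficiently saturated (monster) model `U` (saturation over the
parameter set `C` is expressed by the finite-intersection-property hypothesis `hsat`),
every non-empty `C`-definable set `X ⊆ Uⁿ` contains a realization of a type over `C` of
dimension exactly `d X`. -/
theorem exists_tuple_dim_eq {L : FirstOrder.Language} {U : Type*} [L.Structure U]
    (D : FiberedDim L U) (C : Set U) {n : ℕ} (X : Set (Fin n → U))
    (hX : Set.Definable C L X) (hne : X.Nonempty)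
    (hsat : ∀ (m : ℕ) (F : Set (Set (Fin m → U))), (∀ Y ∈ F, Set.Definable C L Y) →
      (∀ G : Finset (Set (Fin m → U)), ↑G ⊆ F → (⋂ Y ∈ G, (Y : Set (Fin m → U))).Nonempty) →
      (⋂ Y ∈ F, Y).Nonempty) :
    ∃ a : Fin n → U, D.IsDimOver C a (D.d X) := by
  have hXne : D.d X ≠ ⊥ := fun h => hne.ne_empty ((D.dim1_empty X).1 h)
  have hmono : ∀ (A B : Set (Fin n → U)), A ⊆ B → D.d A ≤ D.d B := by
    intro A B h
    have h2 := D.dim2 B A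
    rw [Set.union_eq_self_of_subset_right h] at h2
    rw [h2]; exact le_max_right _ _
  set F : Set (Set (Fin n → U)) :=
    insert X {Z | ∃ Y, Set.Definable C L Y ∧ D.d Y < D.d X ∧ Z = Yᶜ} with hF
  have hdef : ∀ Y ∈ F, Set.Definable C L Y := by
    rintro Z (rfl | ⟨Y, hY, -, rfl⟩)
    · exact hX
    · exact hY.compl
  have key : ∀ G : Finset (Set (Fin n → U)), ↑G ⊆ F →
      ∃ W : Set (Fin n → U), D.d W < D.d X ∧ X \ W ⊆ ⋂ Y ∈ G, Y := by
    intro G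
    classical
    induction G using Finset.induction_on with
    | empty =>
      intro _
      exact ⟨∅, by rw [(D.dim1_empty ∅).2 rfl]; exact lt_of_le_of_ne bot_le (Ne.symm hXne),
        by simp⟩
    | @insert Z G hZG ih =>
      intro hG
      obtain ⟨W, hWlt, hWsub⟩ := ih (fun x hx => hG (Finset.mem_insert_of_mem hx))
      have hZ : Z ∈ F := hG (Finset.mem_insert_self _ _)
      rcases hZ with rfl | ⟨Y, _, hYlt, rfl⟩
      · refine ⟨W, hWlt, ?_⟩
        intro x hx
        rw [Finset.set_biInter_insert]
        exact ⟨hx.1, hWsub hx⟩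
      · refine ⟨W ∪ Y, by rw [D.dim2]; exact max_lt hWlt hYlt, ?_⟩
        intro x hx
        rw [Finset.set_biInter_insert]
        exact ⟨fun hxY => hx.2 (Or.inr hxY), hWsub ⟨hx.1, fun h => hx.2 (Or.inl h)⟩⟩
  have hfin : ∀ G : Finset (Set (Fin n → U)), ↑G ⊆ F →
      (⋂ Y ∈ G, (Y : Set (Fin n → U))).Nonempty := by
    intro G hG
    obtain ⟨W, hWlt, hWsub⟩ := key G hG
    have hXW : (X \ W).Nonempty := by
      rw [Set.diff_nonempty]
      intro h
      exact absurd (hmono X W h) (not_le.2 hWlt)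
    exact hXW.mono hWsub
  obtain ⟨a, ha⟩ := hsat n F hdef hfin
  refine ⟨a, ⟨X, hX, Set.mem_iInter₂.1 ha X (Set.mem_insert _ _), rfl⟩, ?_⟩
  intro Y hY haY
  by_contra h
  push_neg at h
  exact Set.mem_iInter₂.1 ha Yᶜ (Or.inr ⟨Y, hY, h, rfl⟩) haY
end

section
/- Let U be a monster model of a complete theory T, K ⊨ T a small model, and suppose that for every non-empty definable set Y ⊆ K' (K' any model) there exists a ∈ Y(U) with tp(a/K') definable over a code of Y (density of definable 1-types over codes). Then for every n and every non-empty definable X ⊆ Kⁿ there exists a ∈ X(U) with tp(a/K) definable over a code of X. -/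
open FirstOrder Set

/-- `σ(X) = X` setwise, for `X ⊆ Uᵅ`. -/
def FixesSet {L : FirstOrder.Language} {U : Type*} [L.Structure U] (σ : U ≃[L] U)
    {α : Type*} (X : Set (α → U)) : Prop :=
  (fun x : α → U => fun i => σ (x i)) '' X = X

/-- `CodeDefType L K X a` says that `tp(a/K)` is definable over a code of `X`: every
formula has a defining set `W` which is definable and invariant under every automorphism
of the monster `U` fixing `X` setwise (i.e. `W` is definable over `c(X)`). -/
def CodeDefType (L : FirstOrder.Language) {U : Type*} [L.Structure U] (K : Set U)
    {nX : ℕ} (X : Set (Fin nX → U)) {α : Type*} (a : α → U) : Prop :=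
  ∀ (k : ℕ) (Z : Set (α ⊕ Fin k → U)), Set.Definable (∅ : Set U) L Z →
    ∃ W : Set (Fin k → U), Set.Definable (Set.univ : Set U) L W ∧
      (∀ σ : U ≃[L] U, FixesSet σ X → FixesSet σ W) ∧
      ∀ m : Fin k → U, (∀ i, m i ∈ K) → (Sum.elim a m ∈ Z ↔ m ∈ W)

section Aux

variable {L : FirstOrder.Language} {U : Type*} [L.Structure U]

/-- `FixesSet` as a pointwise criterion. -/
lemma fixesSet_iff_forall (σ : U ≃[L] U) {α : Type*} (X : Set (α → U)) :
    FixesSet σ X ↔ ∀ x : α → U, x ∈ X ↔ (fun i => σ (x i)) ∈ X := by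
  constructor
  · intro h x
    constructor
    · intro hx
      rw [← h]
      exact ⟨x, hx, rfl⟩
    · intro hx
      rw [← h] at hx
      obtain ⟨y, hy, hyx⟩ := hx
      have : y = x := by
        funext i
        exact σ.injective (congrFun hyx i)
      rwa [← this]
  · intro h
    ext x
    constructor
    · rintro ⟨y, hy, rfl⟩
      exact (h y).1 hy
    · intro hx
      refine ⟨fun i => σ.symm (x i), ?_, ?_⟩
      · apply (h (fun i => σ.symm (x i))).2
        have : (fun i => σ (σ.symm (x i))) = x := by
          funext i; simp
        rwa [this]
      · funext i; simp

/-- Sets definable without parameters are invariant under all automorphisms. -/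
lemma mem_iff_comp_mem_of_empty_definable {α : Type*} {Z : Set (α → U)}
    (hZ : Set.Definable (∅ : Set U) L Z) (σ : U ≃[L] U) (v : α → U) :
    v ∈ Z ↔ (fun i => σ (v i)) ∈ Z := by
  obtain ⟨φ, rfl⟩ := Set.empty_definable_iff.1 hZ
  simp only [mem_setOf_eq]
  exact (Language.StrongHomClass.realize_formula σ φ (v := v)).symm

/-- A slice of a definable set at an arbitrary tuple of parameters is definable with
parameters from `univ`. -/
lemma definable_slice {α β : Type*} {Z : Set (α ⊕ β → U)}
    (hZ : Set.Definable (univ : Set U) L Z) (a : α → U) :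
    Set.Definable (univ : Set U) L {m : β → U | Sum.elim a m ∈ Z} := by
  rw [Set.definable_iff_exists_formula_sum] at hZ ⊢
  obtain ⟨φ, rfl⟩ := hZ
  refine ⟨φ.relabel (Sum.elim Sum.inl
    (Sum.elim (fun i => Sum.inl ⟨a i, mem_univ _⟩) Sum.inr)), ?_⟩
  ext m
  simp only [mem_setOf_eq]
  rw [Language.Formula.realize_relabel]
  exact iff_of_eq (congrArg φ.Realize (funext fun x => by rcases x with c | (i | j) <;> rfl))

/-- Case analysis for `Fin (n + k)`. -/
lemma fin_eq_castAdd_or_eq_natAdd {n k : ℕ} (i : Fin (n + k)) :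
    (∃ j : Fin n, i = Fin.castAdd k j) ∨ ∃ j : Fin k, i = Fin.natAdd n j := by
  rcases lt_or_ge (i : ℕ) n with h | h
  · exact Or.inl ⟨⟨(i : ℕ), h⟩, by ext; simp⟩
  · refine Or.inr ⟨⟨(i : ℕ) - n, by omega⟩, by ext; simp; omega⟩

/-- Extracting the "invariance of the type" consequence of `CodeDefType` over `univ`. -/
lemma q_of_codeDefType {nY : ℕ} {Y : Set (Fin nY → U)} {α : Type*} {y : α → U}
    (h : CodeDefType L (univ : Set U) Y y) {σ : U ≃[L] U} (hσ : FixesSet σ Y)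
    {k : ℕ} {Z : Set (α ⊕ Fin k → U)} (hZ : Set.Definable (∅ : Set U) L Z)
    (m : Fin k → U) :
    Sum.elim y m ∈ Z ↔ Sum.elim y (fun i => σ (m i)) ∈ Z := by
  obtain ⟨W, _, hWinv, hWm⟩ := h k Z hZ
  rw [hWm m (fun _ => mem_univ _), hWm _ (fun _ => mem_univ _)]
  exact (fixesSet_iff_forall σ W).1 (hWinv σ hσ) m

/-- An automorphism fixing `Y` setwise fixes any element whose type (over `univ`)
is definable over a code of `Y`, pointwise. -/
lemma pointwise_fix {nY : ℕ} {Y : Set (Fin nY → U)} {y : Fin nY → U}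
    (h : CodeDefType L (univ : Set U) Y y) {σ : U ≃[L] U} (hσ : FixesSet σ Y)
    (i : Fin nY) : σ (y i) = y i := by
  have hZ : Set.Definable (∅ : Set U) L
      {v : Fin nY ⊕ Fin 1 → U | v (Sum.inl i) = v (Sum.inr 0)} := by
    rw [Set.empty_definable_iff]
    exact ⟨Language.Term.equal (Language.Term.var (Sum.inl i)) (Language.Term.var (Sum.inr 0)), by
      ext v
      simp [Language.Formula.realize_equal]⟩
  have := (q_of_codeDefType h hσ hZ (fun _ => y i)).1 (by simp)
  simpa using this.symm

end Aux

/-- The main induction, carried out with parameters from all of `U`. -/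
lemma density_main_univ {L : FirstOrder.Language} {U : Type*} [L.Structure U]
    (h1 : ∀ (K' : L.ElementarySubstructure U) (Y : Set (Fin 1 → U)),
      Set.Definable (K' : Set U) L Y → Y.Nonempty →
      ∃ a : Fin 1 → U, a ∈ Y ∧ CodeDefType L (K' : Set U) Y a) :
    ∀ (n : ℕ) (X : Set (Fin n → U)), Set.Definable (univ : Set U) L X → X.Nonempty →
      ∃ a : Fin n → U, a ∈ X ∧ CodeDefType L (univ : Set U) X a := by
  intro n
  induction n with
  | zero =>
    rintro X hX ⟨a, ha⟩
    refine ⟨a, ha, ?_⟩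
    intro k Z hZ
    refine ⟨{m | Sum.elim a m ∈ Z}, definable_slice (hZ.mono (empty_subset _)) a,
      ?_, fun m _ => Iff.rfl⟩
    intro σ _
    rw [fixesSet_iff_forall]
    intro m
    simp only [mem_setOf_eq]
    have h0 := mem_iff_comp_mem_of_empty_definable hZ σ (Sum.elim a m)
    have he : (fun i => σ (Sum.elim a m i)) = Sum.elim a (fun i => σ (m i)) := by
      funext x
      rcases x with i | j
      · exact i.elim0
      · rfl
    rwa [he] at h0
  | succ n ih =>
    rintro X hX hne
    -- the projection of X to the first n coordinates
    set πX : Set (Fin n → U) := (fun g : Fin (n + 1) → U => g ∘ Fin.castSucc) '' X with hπX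
    have hπdef : Set.Definable (univ : Set U) L πX := hX.image_comp Fin.castSucc
    have hπne : πX.Nonempty := hne.image _
    obtain ⟨a, haπ, ha⟩ := ih πX hπdef hπne
    -- the fiber of X over a
    set τ : Fin (n + 1) → Fin n ⊕ Fin 1 :=
      Fin.lastCases (Sum.inr 0) (fun i => Sum.inl i) with hτ
    have hτcast : ∀ i : Fin n, τ (Fin.castSucc i) = Sum.inl i := fun i => by
      simp [hτ]
    have hτlast : τ (Fin.last n) = Sum.inr 0 := by simp [hτ]
    set X₂ : Set (Fin n ⊕ Fin 1 → U) := (fun v : Fin n ⊕ Fin 1 → U => v ∘ τ) ⁻¹' X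
      with hX₂
    have hX₂def : Set.Definable (univ : Set U) L X₂ := hX.preimage_comp τ
    set Xa : Set (Fin 1 → U) := {y : Fin 1 → U | Sum.elim a y ∈ X₂} with hXa
    have hXadef : Set.Definable (univ : Set U) L Xa := definable_slice hX₂def a
    have hmemXa : ∀ y : Fin 1 → U, y ∈ Xa ↔ Fin.snoc a (y 0) ∈ X := by
      intro y
      have : Sum.elim a y ∘ τ = Fin.snoc a (y 0) := by
        funext i
        refine Fin.lastCases ?_ ?_ i
        · rw [Function.comp_apply, hτlast, Fin.snoc_last]
          rfl
        · intro j
          rw [Function.comp_apply, hτcast, Fin.snoc_castSucc]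
          rfl
      simp only [hXa, mem_setOf_eq, hX₂, mem_preimage, this]
    have hXane : Xa.Nonempty := by
      obtain ⟨x, hx, hxa⟩ := haπ
      refine ⟨fun _ => x (Fin.last n), ?_⟩
      rw [hmemXa]
      have : Fin.snoc a (x (Fin.last n)) = x := by
        funext i
        refine Fin.lastCases ?_ ?_ i
        · rw [Fin.snoc_last]
        · intro j
          rw [Fin.snoc_castSucc, ← hxa]
          rfl
      rwa [this]
    obtain ⟨b, hbXa, hb⟩ := h1 ⊤ Xa
      (by rw [Language.ElementarySubstructure.coe_top]; exact hXadef)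
      hXane
    rw [Language.ElementarySubstructure.coe_top] at hb
    set ab : Fin (n + 1) → U := Fin.snoc a (b 0) with habdef
    have habX : ab ∈ X := (hmemXa b).1 hbXa
    refine ⟨ab, habX, ?_⟩
    intro k Z hZ
    refine ⟨{m | Sum.elim ab m ∈ Z}, definable_slice (hZ.mono (empty_subset _)) ab,
      ?_, fun m _ => Iff.rfl⟩
    intro σ hσX
    -- σ fixes the projection
    have hσπ : FixesSet σ πX := by
      show (fun x : Fin n → U => fun i => σ (x i)) '' πX = πX
      conv_rhs => rw [hπX, ← hσX]
      rw [hπX, image_image, image_image]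
      rfl
    -- hence σ fixes a pointwise
    have hσa : ∀ i, σ (a i) = a i := pointwise_fix ha hσπ
    -- hence σ fixes the fiber Xa setwise
    have hσXa : FixesSet σ Xa := by
      rw [fixesSet_iff_forall]
      intro y
      rw [hmemXa, hmemXa]
      have hXpt := (fixesSet_iff_forall σ X).1 hσX (Fin.snoc a (y 0))
      have he : (fun i : Fin (n + 1) => σ ((Fin.snoc a (y 0) : Fin (n + 1) → U) i)) =
          (Fin.snoc a (σ (y 0)) : Fin (n + 1) → U) := by
        funext i
        rcases Fin.eq_castSucc_or_eq_last i with ⟨j, rfl⟩ | rfl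
        · show σ ((Fin.snoc a (y 0) : Fin (n + 1) → U) j.castSucc) =
            (Fin.snoc a (σ (y 0)) : Fin (n + 1) → U) j.castSucc
          rw [Fin.snoc_castSucc, Fin.snoc_castSucc, hσa]
        · show σ ((Fin.snoc a (y 0) : Fin (n + 1) → U) (Fin.last n)) =
            (Fin.snoc a (σ (y 0)) : Fin (n + 1) → U) (Fin.last n)
          rw [Fin.snoc_last, Fin.snoc_last]
      rwa [he] at hXpt
    -- now transfer invariance through b
    set ρ : Fin (n + 1) ⊕ Fin k → Fin 1 ⊕ Fin (n + k) :=
      Sum.elim (Fin.lastCases (Sum.inl 0) (fun i => Sum.inr (Fin.castAdd k i)))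
        (fun j => Sum.inr (Fin.natAdd n j)) with hρ
    set Z' : Set (Fin 1 ⊕ Fin (n + k) → U) := (fun v : Fin 1 ⊕ Fin (n + k) → U => v ∘ ρ) ⁻¹' Z
      with hZ'def
    have hZ' : Set.Definable (∅ : Set U) L Z' := hZ.preimage_comp ρ
    have key : ∀ m : Fin k → U, Sum.elim ab m ∈ Z ↔ Sum.elim b (Fin.append a m) ∈ Z' := by
      intro m
      have : Sum.elim b (Fin.append a m) ∘ ρ = Sum.elim ab m := by
        funext x
        rcases x with i | j
        · rcases Fin.eq_castSucc_or_eq_last i with ⟨i', rfl⟩ | rfl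
          · simp [hρ, habdef, Fin.snoc_castSucc, Fin.append_left]
          · simp [hρ, habdef, Fin.snoc_last]
        · simp [hρ, Fin.append_right]
      rw [hZ'def, mem_preimage, this]
    rw [fixesSet_iff_forall]
    intro m
    simp only [mem_setOf_eq]
    rw [key m, key (fun i => σ (m i))]
    have hQb := q_of_codeDefType hb hσXa hZ' (Fin.append a m)
    have he : (fun i : Fin (n + k) => σ (Fin.append a m i)) = Fin.append a (fun j => σ (m j)) := by
      funext i
      rcases fin_eq_castAdd_or_eq_natAdd i with ⟨i', rfl⟩ | ⟨j, rfl⟩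
      · show σ (Fin.append a m (Fin.castAdd k i')) = _
        rw [Fin.append_left, Fin.append_left, hσa]
      · show σ (Fin.append a m (Fin.natAdd n j)) = _
        rw [Fin.append_right, Fin.append_right]
    rwa [he] at hQb

/-- in a monster model `U` of a complete theory, if definable 1-types are
dense over codes (over every small model `K'`), then definable `n`-types are dense over
codes: for every `n` and every non-empty set `X ⊆ Uⁿ` definable over a small model `K`,
there is `a ∈ X(U)` whose type over `K` is definable over a code of `X`. -/
theorem density_one_to_n_over_codes {L : FirstOrder.Language} {U : Type*}
    [L.Structure U] (K : L.ElementarySubstructure U)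
    (h1 : ∀ (K' : L.ElementarySubstructure U) (Y : Set (Fin 1 → U)),
      Set.Definable (K' : Set U) L Y → Y.Nonempty →
      ∃ a : Fin 1 → U, a ∈ Y ∧ CodeDefType L (K' : Set U) Y a) :
    ∀ (n : ℕ) (X : Set (Fin n → U)), Set.Definable (K : Set U) L X → X.Nonempty →
      ∃ a : Fin n → U, a ∈ X ∧ CodeDefType L (K : Set U) X a := by
  intro n X hX hne
  obtain ⟨a, haX, ha⟩ := density_main_univ h1 n X (hX.mono (subset_univ _)) hne
  refine ⟨a, haX, ?_⟩
  intro k Z hZ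
  obtain ⟨W, hWdef, hWinv, hWm⟩ := ha k Z hZ
  exact ⟨W, hWdef, hWinv, fun m _ => hWm m (fun _ => mem_univ _)⟩
end

section
/- In a monster model U of CODF, the differential-algebraic closure operator cl, defined by a ∈ cl(B) iff there is a non-zero differential polynomial q over the differential subfield generated by B with q(a) = 0, satisfies the exchange property: if a ∈ cl(B ∪ {b}) \ cl(B), then b ∈ cl(B ∪ {a}). -/
open MvPolynomial

/-- A closed ordered differential field (CODF): a real closed ordered field equipped with
a derivation `δ` satisfying Singer's genericity axiom scheme. A differential polynomial
`f ∈ K{x}` of order `n` is represented by the ordinary polynomial `F = f*` in the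
variables `δ⁰(x), …, δⁿ(x)` (the order condition is that `F` really involves the last
variable), and `f(a) = F(a, δ(a), …, δⁿ(a))`. -/
class CODF (K : Type*) [Field K] [LinearOrder K] [IsStrictOrderedRing K] where
  /-- the derivation -/
  δ : K → K
  δ_add : ∀ x y : K, δ (x + y) = δ x + δ y
  δ_mul : ∀ x y : K, δ (x * y) = x * δ y + δ x * y
  /-- real closedness: non-negative elements are squares -/
  sq_root : ∀ a : K, 0 ≤ a → ∃ b : K, b * b = a
  /-- real closedness: odd-degree polynomials have roots -/
  odd_root : ∀ p : Polynomial K, Odd p.natDegree → ∃ x : K, Polynomial.eval x p = 0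
  /-- the CODF axiom scheme -/
  generic : ∀ (n : ℕ) (F : MvPolynomial (Fin (n + 1)) K),
    degreeOf (Fin.last n) F ≠ 0 →
    ∀ ε : K, 0 < ε → ∀ c : Fin (n + 1) → K,
      eval c F = 0 → eval c (pderiv (Fin.last n) F) ≠ 0 →
      ∃ a : K, eval (fun i : Fin (n + 1) => δ^[(i : ℕ)] a) F = 0 ∧
        ∀ i : Fin (n + 1), |δ^[(i : ℕ)] a - c i| < ε

/-- The sequence of iterated derivatives `(a, δ(a), …, δ^{n-1}(a))` of `a`. -/
def derivVec {K : Type*} [Field K] [LinearOrder K] [IsStrictOrderedRing K] [CODF K] (n : ℕ) (a : K) :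
    Fin n → K := fun i => CODF.δ^[(i : ℕ)] a

/-- The differential subfield `ℚ⟨B⟩` of `U` generated by `B`: the subfield generated by
all iterated derivatives of elements of `B` (it contains the prime field `ℚ`). -/
def derivClosure {U : Type*} [Field U] [LinearOrder U] [IsStrictOrderedRing U] [CODF U] (B : Set U) : Subfield U :=
  Subfield.closure (⋃ b ∈ B, Set.range fun k : ℕ => CODF.δ^[k] b)

/-- The differential-algebraic closure operator: `a ∈ cl(B)` iff there is a non-zero
differential polynomial `q ∈ ℚ⟨B⟩{x}` with `q(a) = 0`; `q` of order `m` is represented by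
a non-zero ordinary polynomial over `ℚ⟨B⟩` in the variables `δ⁰(x), …, δᵐ(x)`. -/
def InCl {U : Type*} [Field U] [LinearOrder U] [IsStrictOrderedRing U] [CODF U] (B : Set U) (a : U) : Prop :=
  ∃ (m : ℕ) (P : MvPolynomial (Fin (m + 1)) (derivClosure B)), P ≠ 0 ∧
    eval (derivVec (m + 1) a) (P.map (derivClosure B).subtype) = 0

/-!
`a ∈ cl(B)` says exactly that the derivatives `(δᵏ a)ₖ` are algebraically dependent over
`ℚ⟨B⟩`, and `ℚ⟨B ∪ {c}⟩` is the field generated over `ℚ⟨B⟩` by the derivatives of `c`.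
Exchange is then the symmetry of algebraic independence: if `x` is independent over `K`, then
`y` is independent over `K(x)` iff the joint family `(x, y)` is independent over `K`, which in
turn forces `x` to be independent over `K(y)`.
-/

open Set

theorem AlgebraicIndependent.adjoin_range_symm {ι ι' K E : Type*} [Field K] [Field E]
    [Algebra K E] {x : ι → E} {y : ι' → E} (hx : AlgebraicIndependent K x)
    (hy : AlgebraicIndependent (IntermediateField.adjoin K (range x)) y) :
    AlgebraicIndependent (IntermediateField.adjoin K (range y)) x := by
  rw [IntermediateField.algebraicIndependent_adjoin_iff] at hy ⊢
  have hyx : AlgebraicIndependent K (Sum.elim y x) := hx.sumElim hy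
  have hxy : AlgebraicIndependent K (Sum.elim x y) :=
    (algebraicIndependent_equiv' (Equiv.sumComm ι ι') (by ext (_ | _) <;> rfl)).mpr hyx
  exact (AlgebraicIndependent.sumElim_iff.mp hxy).2

theorem algebraicIndependent_nat_iff_forall_fin {R A : Type*} [CommRing R] [CommRing A]
    [Algebra R A] {x : ℕ → A} :
    AlgebraicIndependent R x ↔ ∀ n, AlgebraicIndependent R (fun i : Fin (n + 1) => x i) := by
  refine ⟨fun hx n => hx.comp _ Fin.val_injective, fun h => ?_⟩
  rw [algebraicIndependent_iff]
  intro p hp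
  obtain ⟨q, hq⟩ : ∃ q : MvPolynomial (Fin (p.vars.sup id + 1)) R, rename Fin.val q = p :=
    exists_rename_eq_of_vars_subset_range _ _ Fin.val_injective fun i hi =>
      ⟨⟨i, Nat.lt_succ_of_le (Finset.le_sup (f := id) hi)⟩, rfl⟩
  rw [← hq, aeval_rename] at hp
  rw [← hq, algebraicIndependent_iff.mp (h _) q hp, map_zero]

section CODF

variable {U : Type*} [Field U] [LinearOrder U] [IsStrictOrderedRing U] [CODF U]

def derivSeq (a : U) : ℕ → U := fun k => CODF.δ^[k] a

theorem inCl_iff_not_algebraicIndependent (B : Set U) (a : U) :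
    InCl B a ↔ ¬ AlgebraicIndependent (derivClosure B) (derivSeq a) := by
  rw [algebraicIndependent_nat_iff_forall_fin]
  simp only [algebraicIndependent_iff, not_forall, InCl, exists_prop]
  refine exists_congr fun m => exists_congr fun P => ?_
  rw [eval_map, aeval_def, and_comm]
  rfl

theorem derivClosure_union_singleton (B : Set U) (c : U) :
    derivClosure (B ∪ {c}) =
      (IntermediateField.adjoin (derivClosure B) (range (derivSeq c))).toSubfield := by
  rw [IntermediateField.adjoin_toSubfield, derivClosure, derivClosure, biUnion_union,
    biUnion_singleton, Subfield.closure_union, Subfield.closure_union]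
  congr 1
  change _ = Subfield.closure (range ((↑) : derivClosure B → U))
  rw [Subtype.range_coe, Subfield.closure_eq, derivClosure]

end CODF

/-- in a monster model `U` of CODF, the closure operator `cl` satisfies the
exchange property: if `a ∈ cl(B ∪ {b}) \ cl(B)`, then `b ∈ cl(B ∪ {a})`. -/
theorem codf_cl_exchange {U : Type*} [Field U] [LinearOrder U] [IsStrictOrderedRing U] [CODF U]
    (B : Set U) (a b : U) (h₁ : InCl (B ∪ {b}) a) (h₂ : ¬ InCl B a) :
    InCl (B ∪ {a}) b := by
  rw [inCl_iff_not_algebraicIndependent, derivClosure_union_singleton] at h₁ ⊢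
  rw [inCl_iff_not_algebraicIndependent, not_not] at h₂
  exact fun hb => h₁ (h₂.adjoin_range_symm hb)
end
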